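/- arXiv:1106.0811 — 2 statements merged into one kernel-verified Lean document; each statement's English description precedes it below -/
import Mathlib

section
/- Let G be a finite simple bipartite graph with nonempty partite sets U and W. Let d̄_U and d̄_W be the average degrees of the vertices in U and in W respectively, and let Δ_U and Δ_W be the maximum degrees of vertices in U and in W respectively. Then √(d̄_U·d̄_W) ≤ M(G) ≤ √(Δ_U·Δ_W). -/
/-!
Upper bound: in a bipartite graph every edge between `X` and `Y` joins `X ∩ U` to `Y ∩ W` or
`X ∩ W` to `Y ∩ U`. Counting the edges of the first kind from either side bounds them both by
`Δ_U |X ∩ U|` and by `Δ_W |Y ∩ W|`, hence by `√(Δ_U Δ_W) √(|X ∩ U| |Y ∩ W|)`; likewise for the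
second kind, and Cauchy–Schwarz `√(ab) + √(cd) ≤ √((a + c)(b + d))` combines the two.

Lower bound: `e(U, W) = ∑_{u ∈ U} deg u = ∑_{w ∈ W} deg w`, so the ratio for `X = U`, `Y = W`
is exactly `√(d̄_U d̄_W)`.
-/

-- `lamMax G`: the largest eigenvalue of the adjacency matrix of `G`.
open Classical in
noncomputable def lamMax {V : Type*} [Fintype V] (G : SimpleGraph V) : ℝ :=
  sSup (spectrum ℝ (G.adjMatrix ℝ))

-- `eXY G X Y = e(X,Y)`: the number of ordered pairs `(x,y) ∈ X × Y` with `x` adjacent to `y`.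
open Classical in
noncomputable def eXY {V : Type*} (G : SimpleGraph V) (X Y : Finset V) : ℕ :=
  ((X ×ˢ Y).filter fun p => G.Adj p.1 p.2).card

/-- `M(G)`: the maximum of `e(X,Y)/√(|X||Y|)` over nonempty `X, Y ⊆ V`. -/
noncomputable def MG {V : Type*} (G : SimpleGraph V) : ℝ :=
  sSup {r : ℝ | ∃ X Y : Finset V, X.Nonempty ∧ Y.Nonempty ∧
    r = (eXY G X Y : ℝ) / Real.sqrt ((X.card : ℝ) * (Y.card : ℝ))}

open Finset

lemma Real.sqrt_mul_add_sqrt_mul_le {a b c d : ℝ} (ha : 0 ≤ a) (hb : 0 ≤ b) (hc : 0 ≤ c)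
    (hd : 0 ≤ d) : √(a * b) + √(c * d) ≤ √((a + c) * (b + d)) := by
  have := Real.sum_sqrt_mul_sqrt_le univ (f := ![a, c]) (g := ![b, d])
    (Fin.forall_fin_two.mpr ⟨ha, hc⟩) (Fin.forall_fin_two.mpr ⟨hb, hd⟩)
  simpa [Fin.sum_univ_two, Real.sqrt_mul, Real.sqrt_mul (add_nonneg ha hc), ha, hc] using this

namespace SimpleGraph

variable {V : Type*} (G : SimpleGraph V) [DecidableRel G.Adj]

lemma eXY_eq_card_interedges (s t : Finset V) : eXY G s t = #(G.interedges s t) := by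
  rw [interedges_def, eXY]
  congr

lemma card_interedges_comm (s t : Finset V) : #(G.interedges s t) = #(G.interedges t s) :=
  have := G.symm
  Rel.card_interedges_comm s t

lemma card_interedges_eq_sum (s t : Finset V) :
    #(G.interedges s t) = ∑ x ∈ s, #{y ∈ t | G.Adj x y} := by
  simp only [interedges_def, card_filter, sum_product]

section

variable {G} [DecidableEq V] {U W : Finset V}

lemma IsBipartiteWith.card_interedges_eq_add (h : G.IsBipartiteWith U W) (s t : Finset V) :
    #(G.interedges s t) = #(G.interedges (s ∩ U) (t ∩ W)) + #(G.interedges (s ∩ W) (t ∩ U)) := by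
  rw [← card_union_of_disjoint]
  · congr 1
    ext ⟨x, y⟩
    simp only [mem_union, mem_interedges_iff, mem_inter]
    constructor
    · rintro ⟨hx, hy, hxy⟩
      rcases h.mem_of_adj hxy with ⟨hxU, hyW⟩ | ⟨hxW, hyU⟩
      · exact .inl ⟨⟨hx, hxU⟩, ⟨hy, hyW⟩, hxy⟩
      · exact .inr ⟨⟨hx, hxW⟩, ⟨hy, hyU⟩, hxy⟩
    · rintro (⟨⟨hx, -⟩, ⟨hy, -⟩, hxy⟩ | ⟨⟨hx, -⟩, ⟨hy, -⟩, hxy⟩) <;> exact ⟨hx, hy, hxy⟩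
  · exact Finset.disjoint_left.mpr fun e he he' ↦ Finset.disjoint_left.mp
      (disjoint_coe.mp h.disjoint) (mem_inter.mp (G.mem_interedges_iff.mp he).1).2
      (mem_inter.mp (G.mem_interedges_iff.mp he').1).2

end

variable [Fintype V]

lemma card_interedges_le_card_mul {s : Finset V} (t : Finset V) {D : ℝ}
    (hD : ∀ x ∈ s, (G.degree x : ℝ) ≤ D) : (#(G.interedges s t) : ℝ) ≤ #s * D := by
  rw [card_interedges_eq_sum, Nat.cast_sum]
  refine (sum_le_card_nsmul _ _ _ fun x hx ↦ le_trans ?_ (hD x hx)).trans_eq (nsmul_eq_mul _ _)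
  rw [← card_neighborFinset_eq_degree]
  exact_mod_cast card_le_card fun y hy ↦ (mem_neighborFinset _ _ _).mpr (mem_filter.mp hy).2

lemma card_interedges_le_sqrt_mul_sqrt {s t : Finset V} {D D' : ℝ}
    (hs : ∀ x ∈ s, (G.degree x : ℝ) ≤ D) (ht : ∀ y ∈ t, (G.degree y : ℝ) ≤ D') :
    (#(G.interedges s t) : ℝ) ≤ √(D * D') * √(#s * #t) := by
  have het := G.card_interedges_le_card_mul s ht
  rw [card_interedges_comm] at het
  set e : ℝ := (#(G.interedges s t) : ℝ)
  have he : 0 ≤ e := Nat.cast_nonneg _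
  have hes : e ≤ #s * D := G.card_interedges_le_card_mul t hs
  rw [← Real.sqrt_mul' _ (by positivity)]
  refine Real.le_sqrt_of_sq_le ?_
  calc e ^ 2 ≤ (#s * D) * (#t * D') := by rw [sq]; exact mul_le_mul hes het he (he.trans hes)
    _ = D * D' * (#s * #t) := by ring

variable {G} {U W : Finset V}

lemma IsBipartiteWith.card_interedges_eq_sum_degree (h : G.IsBipartiteWith U W) :
    #(G.interedges U W) = ∑ u ∈ U, G.degree u := by
  rw [card_interedges_eq_sum]
  exact sum_congr rfl fun u hu ↦ by
    rw [← card_neighborFinset_eq_degree, isBipartiteWith_neighborFinset h (mem_coe.mpr hu)]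

lemma IsBipartiteWith.card_interedges_le [DecidableEq V] (h : G.IsBipartiteWith U W)
    (hcover : ∀ v, v ∈ U ∨ v ∈ W) {DU DW : ℝ} (hDU : ∀ u ∈ U, (G.degree u : ℝ) ≤ DU)
    (hDW : ∀ w ∈ W, (G.degree w : ℝ) ≤ DW) (s t : Finset V) :
    (#(G.interedges s t) : ℝ) ≤ √(DU * DW) * √(#s * #t) := by
  have hcard : ∀ r : Finset V, #(r ∩ U) + #(r ∩ W) = #r := fun r ↦ by
    rw [← card_union_of_disjoint, ← inter_union_distrib_left, inter_eq_left.mpr]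
    · exact fun v _ ↦ mem_union.mpr (hcover v)
    · exact disjoint_of_subset_left inter_subset_right (disjoint_of_subset_right inter_subset_right
        (disjoint_coe.mp h.disjoint))
  have bound : ∀ {X Y : Finset V} {D D' : ℝ}, (∀ x ∈ X, (G.degree x : ℝ) ≤ D) →
      (∀ y ∈ Y, (G.degree y : ℝ) ≤ D') → ∀ s t : Finset V,
      (#(G.interedges (s ∩ X) (t ∩ Y)) : ℝ) ≤ √(D * D') * √(#(s ∩ X) * #(t ∩ Y)) :=
    fun hX hY s t ↦ G.card_interedges_le_sqrt_mul_sqrt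
      (fun x hx ↦ hX x (mem_inter.mp hx).2) (fun y hy ↦ hY y (mem_inter.mp hy).2)
  calc (#(G.interedges s t) : ℝ)
      ≤ √(DU * DW) * √(#(s ∩ U) * #(t ∩ W)) + √(DW * DU) * √(#(s ∩ W) * #(t ∩ U)) := by
        rw [h.card_interedges_eq_add, Nat.cast_add]
        exact add_le_add (bound hDU hDW s t) (bound hDW hDU s t)
    _ ≤ √(DU * DW) * √((#(s ∩ U) + #(s ∩ W)) * (#(t ∩ W) + #(t ∩ U))) := by
        rw [mul_comm DW, ← mul_add]
        gcongr
        exact Real.sqrt_mul_add_sqrt_mul_le (by positivity) (by positivity) (by positivity)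
          (by positivity)
    _ = √(DU * DW) * √(#s * #t) := by
        rw [add_comm (#(t ∩ W) : ℝ)]
        simp only [← Nat.cast_add, hcard]

end SimpleGraph

section MG

variable {V : Type*} (G : SimpleGraph V)

lemma le_MG [Finite V] {X Y : Finset V} (hX : X.Nonempty) (hY : Y.Nonempty) :
    (eXY G X Y : ℝ) / √(#X * #Y) ≤ MG G := by
  refine le_csSup (Set.Finite.bddAbove ?_) ⟨X, Y, hX, hY, rfl⟩
  refine (Set.finite_range fun p : Finset V × Finset V ↦
    (eXY G p.1 p.2 : ℝ) / √(#p.1 * #p.2)).subset ?_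
  rintro _ ⟨X, Y, -, -, rfl⟩
  exact ⟨(X, Y), rfl⟩

lemma MG_le [Nonempty V] {B : ℝ}
    (hB : ∀ X Y : Finset V, X.Nonempty → Y.Nonempty → (eXY G X Y : ℝ) ≤ B * √(#X * #Y)) :
    MG G ≤ B := by
  obtain ⟨v⟩ : Nonempty V := inferInstance
  refine csSup_le ⟨_, {v}, {v}, singleton_nonempty v, singleton_nonempty v, rfl⟩ ?_
  rintro _ ⟨X, Y, hX, hY, rfl⟩
  rw [div_le_iff₀ (by have := hX.card_pos; have := hY.card_pos; positivity)]
  exact hB X Y hX hY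

end MG

/-- For a bipartite graph with partite sets `U`, `W`:
`√(d̄_U·d̄_W) ≤ M(G) ≤ √(Δ_U·Δ_W)`. -/
theorem statement7 {V : Type*} [Fintype V] (G : SimpleGraph V) [DecidableRel G.Adj]
    (U W : Finset V) (hU : U.Nonempty) (hW : W.Nonempty)
    (hdisj : Disjoint U W) (hcover : ∀ v : V, v ∈ U ∨ v ∈ W)
    (hbip : ∀ a b, G.Adj a b → (a ∈ U ∧ b ∈ W) ∨ (a ∈ W ∧ b ∈ U)) :
    Real.sqrt (((∑ u ∈ U, (G.degree u : ℝ)) / (U.card : ℝ)) *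
        ((∑ w ∈ W, (G.degree w : ℝ)) / (W.card : ℝ))) ≤ MG G ∧
      MG G ≤ Real.sqrt ((U.sup' hU fun u => (G.degree u : ℝ)) *
        (W.sup' hW fun w => (G.degree w : ℝ))) := by
  classical
  have h : G.IsBipartiteWith U W := ⟨disjoint_coe.mpr hdisj, hbip⟩
  have : Nonempty V := hU.to_type
  constructor
  · have hsum : ∑ w ∈ W, (G.degree w : ℝ) = ∑ u ∈ U, (G.degree u : ℝ) := by
      exact_mod_cast (SimpleGraph.isBipartiteWith_sum_degrees_eq h).symm
    have heUW : (eXY G U W : ℝ) = ∑ u ∈ U, (G.degree u : ℝ) := by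
      rw [G.eXY_eq_card_interedges, h.card_interedges_eq_sum_degree, Nat.cast_sum]
    calc _ = (eXY G U W : ℝ) / √(#U * #W) := by
          rw [hsum, div_mul_div_comm, ← sq, Real.sqrt_div (sq_nonneg _), heUW,
            Real.sqrt_sq (sum_nonneg fun _ _ ↦ Nat.cast_nonneg _)]
      _ ≤ MG G := le_MG G hU hW
  · refine MG_le G fun X Y _ _ ↦ ?_
    rw [G.eXY_eq_card_interedges]
    exact h.card_interedges_le hcover (fun u ↦ le_sup' (fun u ↦ (G.degree u : ℝ)))
      (fun w ↦ le_sup' (fun w ↦ (G.degree w : ℝ))) X Y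
end

section
/- Let G be a finite simple bipartite graph with nonempty partite sets U and W. Then M(G) ≤ λmax(G) ≤ √(((1/4)·log|U| + 1)·((1/4)·log|W| + 1))·M(G). -/
open Finset Real Matrix

theorem sq_sqrt_add_one_sub_sqrt_le {b : ℝ} (hb : 0 < b) :
    (√(b + 1) - √b) ^ 2 ≤ (1 / 4) * (log (b + 1) - log b) := by
  set p := √(b + 1)
  set q := √b
  have hq : 0 < q := sqrt_pos.2 hb
  have hqp : q < p := sqrt_lt_sqrt hb.le (lt_add_one b)
  set x := (p - q) / (p + q)
  have hx : (p - q) ^ 2 = x := by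
    have hpq : (p + q) * (p - q) = 1 := by
      rw [← sq_sub_sq, sq_sqrt (by positivity), sq_sqrt hb.le]; ring
    rw [eq_div_iff (by linarith)]; nlinarith [hpq]
  -- the first term of the series of `artanh x = (1 / 2) log ((1 + x) / (1 - x))`
  have hlog : x ≤ 1 / 2 * log ((1 + x) / (1 - x)) := by
    simpa using sum_range_le_log_div (div_nonneg (by linarith) (by linarith))
      (by rw [div_lt_one (by linarith)]; linarith) 1
  have hratio : (1 + x) / (1 - x) = p / q := by
    rw [one_add_div (by linarith), one_sub_div (by linarith),
      div_div_div_cancel_right₀ (by linarith)]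
    ring_nf
  have hlogpq : log (p / q) = (log (b + 1) - log b) / 2 := by
    rw [log_div (by linarith) hq.ne', log_sqrt (by positivity), log_sqrt hb.le]
    ring
  rw [hratio, hlogpq] at hlog
  linarith

theorem sum_range_sq_sqrt_succ_sub_sqrt_le (m : ℕ) :
    ∑ i ∈ range m, (√(i + 1) - √i) ^ 2 ≤ (1 / 4) * log m + 1 := by
  induction m with
  | zero => simp
  | succ m ih =>
    rcases Nat.eq_zero_or_pos m with rfl | hm
    · simp
    have hstep := sq_sqrt_add_one_sub_sqrt_le (b := m) (by exact_mod_cast hm)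
    rw [sum_range_succ]
    push_cast
    linarith

theorem sum_range_mul_eq_add_sum_range_sub_mul (a x : ℕ → ℝ) (m : ℕ) :
    ∑ i ∈ range m, a i * x i =
      a m * ∑ i ∈ range m, x i + ∑ i ∈ range m, (a i - a (i + 1)) * ∑ k ∈ range (i + 1), x k := by
  induction m with
  | zero => simp
  | succ m ih =>
    rw [sum_range_succ, ih, sum_range_succ (fun i => (a i - a (i + 1)) * _), sum_range_succ x m]
    ring

theorem sum_range_sub_mul_sqrt_le (a : ℕ → ℝ) {m : ℕ} (ham : a m = 0) :
    ∑ i ∈ range m, (a i - a (i + 1)) * √(i + 1) ≤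
      √((1 / 4) * log m + 1) * √(∑ i ∈ range m, a i ^ 2) := by
  have htel (i : ℕ) : √(i + 1) = ∑ k ∈ range (i + 1), (√(k + 1) - √k) := by
    have := sum_range_sub (fun k : ℕ => √(k : ℝ)) (i + 1)
    push_cast at this
    simp [this]
  calc ∑ i ∈ range m, (a i - a (i + 1)) * √(i + 1)
      = ∑ i ∈ range m, a i * (√(i + 1) - √i) := by
        simp_rw [sum_range_mul_eq_add_sum_range_sub_mul a _ m, ham, zero_mul, zero_add, ← htel]
    _ ≤ √(∑ i ∈ range m, a i ^ 2) * √(∑ i ∈ range m, (√(i + 1) - √i) ^ 2) :=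
        sum_mul_le_sqrt_mul_sqrt _ _ _
    _ ≤ √((1 / 4) * log m + 1) * √(∑ i ∈ range m, a i ^ 2) := by
        rw [mul_comm]
        gcongr
        exact sum_range_sq_sqrt_succ_sub_sqrt_le m

theorem sum_range_sum_range_mul_le (E : ℕ → ℕ → ℝ) (a b : ℕ → ℝ) {m n : ℕ} {c : ℝ}
    (hc : 0 ≤ c) (ha : ∀ i < m, a (i + 1) ≤ a i) (ham : a m = 0)
    (hb : ∀ j < n, b (j + 1) ≤ b j) (hbn : b n = 0)
    (hE : ∀ i < m, ∀ j < n,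
      ∑ k ∈ range (i + 1), ∑ l ∈ range (j + 1), E k l ≤ c * √((i + 1) * (j + 1))) :
    ∑ i ∈ range m, ∑ j ∈ range n, a i * E i j * b j ≤
      c * (√((1 / 4) * log m + 1) * √(∑ i ∈ range m, a i ^ 2)) *
        (√((1 / 4) * log n + 1) * √(∑ j ∈ range n, b j ^ 2)) := by
  have hΔb : 0 ≤ ∑ j ∈ range n, (b j - b (j + 1)) * √(j + 1) :=
    sum_nonneg fun j hj => mul_nonneg (sub_nonneg.2 (hb j (mem_range.1 hj))) (sqrt_nonneg _)
  calc ∑ i ∈ range m, ∑ j ∈ range n, a i * E i j * b j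
      = ∑ i ∈ range m, (a i - a (i + 1)) * ∑ j ∈ range n, (b j - b (j + 1)) *
          ∑ k ∈ range (i + 1), ∑ l ∈ range (j + 1), E k l := by
        -- Abel summation in `i`, then in `j`
        simp_rw [mul_assoc, ← mul_sum]
        rw [sum_range_mul_eq_add_sum_range_sub_mul a _ m, ham, zero_mul, zero_add]
        refine sum_congr rfl fun i _ => ?_
        congr 1
        rw [sum_comm]
        simp_rw [← sum_mul, mul_comm _ (b _)]
        rw [sum_range_mul_eq_add_sum_range_sub_mul b _ n, hbn, zero_mul, zero_add]
        simp_rw [sum_comm (s := range (i + 1))]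
    _ ≤ ∑ i ∈ range m, (a i - a (i + 1)) * ∑ j ∈ range n, (b j - b (j + 1)) *
          (c * (√(i + 1) * √(j + 1))) := by
        gcongr with i hi j hj
        · exact sub_nonneg.2 (ha i (mem_range.1 hi))
        · exact sub_nonneg.2 (hb j (mem_range.1 hj))
        · rw [← sqrt_mul (by positivity)]
          exact hE i (mem_range.1 hi) j (mem_range.1 hj)
    _ = c * (∑ i ∈ range m, (a i - a (i + 1)) * √(i + 1)) *
          ∑ j ∈ range n, (b j - b (j + 1)) * √(j + 1) := by
        rw [mul_assoc, sum_mul_sum, mul_sum]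
        refine sum_congr rfl fun i _ => ?_
        rw [mul_sum, mul_sum]
        refine sum_congr rfl fun j _ => ?_
        ring
    _ ≤ _ := by
        gcongr
        · exact sum_range_sub_mul_sqrt_le a ham
        · exact sum_range_sub_mul_sqrt_le b hbn

theorem Finset.exists_bijOn_range_antitoneOn {V : Type*} (s : Finset V) (hs : s.Nonempty)
    (f : V → ℝ) : ∃ σ : ℕ → V, Set.BijOn σ (range #s) s ∧ AntitoneOn (f ∘ σ) (range #s) := by
  classical
  set e := s.equivFin.symm
  set p := Tuple.sort fun i => -f (e i)
  have hp := Tuple.monotone_sort fun i => -f (e i)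
  set σ : ℕ → V := fun k => if h : k < #s then e (p ⟨k, h⟩) else hs.choose
  have hσ : ∀ k (h : k < #s), σ k = e (p ⟨k, h⟩) := fun k h => dif_pos h
  refine ⟨σ, ⟨fun k hk => ?_, fun k hk l hl hkl => ?_, fun v hv => ?_⟩, fun k hk l hl hkl => ?_⟩
  · simp only [coe_range, Set.mem_Iio] at hk
    simp [hσ k hk]
  · simp only [coe_range, Set.mem_Iio] at hk hl
    rw [hσ k hk, hσ l hl] at hkl
    simpa using p.injective (e.injective (Subtype.coe_injective hkl))
  · obtain ⟨⟨k, hk⟩, hki⟩ := p.surjective (e.symm ⟨v, hv⟩)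
    refine ⟨k, by simpa using hk, ?_⟩
    simp [hσ k hk, hki]
  · simp only [coe_range, Set.mem_Iio] at hk hl
    simpa [hσ k hk, hσ l hl] using hp (show (⟨k, hk⟩ : Fin #s) ≤ ⟨l, hl⟩ from hkl)

theorem Finset.exists_antitone_rearrangement {V : Type*} (s : Finset V) (hs : s.Nonempty)
    {f : V → ℝ} (hf : ∀ v ∈ s, 0 ≤ f v) :
    ∃ (σ : ℕ → V) (a : ℕ → ℝ), Set.BijOn σ (range #s) s ∧ (∀ i ∈ range #s, a i = f (σ i)) ∧
      (∀ i < #s, a (i + 1) ≤ a i) ∧ a #s = 0 := by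
  obtain ⟨σ, hσ, hσf⟩ := s.exists_bijOn_range_antitoneOn hs f
  refine ⟨σ, fun i => if i < #s then f (σ i) else 0, hσ, fun i hi => if_pos (mem_range.1 hi),
    fun i hi => ?_, if_neg (lt_irrefl _)⟩
  simp only [if_pos hi]
  split_ifs with h
  · exact hσf (by simpa using hi) (by simpa using h) (Nat.le_succ i)
  · exact hf _ (hσ.mapsTo (by simpa using hi))

theorem Matrix.dotProduct_mulVec_eq_sum_sum {n : Type*} [Fintype n] (A : Matrix n n ℝ)
    (x y : n → ℝ) : x ⬝ᵥ A *ᵥ y = ∑ i, ∑ j, x i * A i j * y j := by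
  simp only [dotProduct, mulVec, mul_sum, mul_assoc]

theorem Matrix.abs_dotProduct_mulVec_le {n : Type*} [Fintype n] {A : Matrix n n ℝ}
    (hA : ∀ i j, 0 ≤ A i j) (x y : n → ℝ) : |x ⬝ᵥ A *ᵥ y| ≤ |x| ⬝ᵥ A *ᵥ |y| := by
  rw [dotProduct_mulVec_eq_sum_sum, dotProduct_mulVec_eq_sum_sum]
  refine (abs_sum_le_sum_abs _ _).trans (sum_le_sum fun i _ => ?_)
  refine (abs_sum_le_sum_abs _ _).trans_eq (sum_congr rfl fun j _ => ?_)
  rw [abs_mul, abs_mul, abs_of_nonneg (hA i j), Pi.abs_apply, Pi.abs_apply]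

namespace Matrix.IsHermitian

variable {n : Type*} [Fintype n] {A : Matrix n n ℝ}

theorem dotProduct_mulVec_comm (hA : A.IsHermitian) (x y : n → ℝ) :
    x ⬝ᵥ A *ᵥ y = y ⬝ᵥ A *ᵥ x := by
  rw [dotProduct_mulVec, ← mulVec_transpose, ← conjTranspose_eq_transpose_of_trivial, hA.eq,
    dotProduct_comm]

theorem dotProduct_mulVec_self_le [DecidableEq n] (hA : A.IsHermitian) (v : n → ℝ) :
    v ⬝ᵥ A *ᵥ v ≤ sSup (spectrum ℝ A) * (v ⬝ᵥ v) := by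
  set e := hA.eigenvectorBasis
  set x : EuclideanSpace ℝ n := WithLp.toLp 2 v
  have hcoeff (j : n) :
      inner ℝ (e j) (WithLp.toLp 2 (A *ᵥ v)) = hA.eigenvalues j * inner ℝ (e j) x := by
    simp only [EuclideanSpace.inner_eq_star_dotProduct, star_trivial]
    rw [dotProduct_comm, hA.dotProduct_mulVec_comm, hA.mulVec_eigenvectorBasis, dotProduct_smul,
      smul_eq_mul, dotProduct_comm]
  have hle (j : n) : hA.eigenvalues j ≤ sSup (spectrum ℝ A) :=
    le_csSup A.finite_real_spectrum.bddAbove (hA.eigenvalues_mem_spectrum_real j)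
  calc v ⬝ᵥ A *ᵥ v = ∑ j, inner ℝ x (e j) * inner ℝ (e j) (WithLp.toLp 2 (A *ᵥ v)) := by
        rw [e.sum_inner_mul_inner]; exact dotProduct_comm _ _
    _ = ∑ j, hA.eigenvalues j * inner ℝ x (e j) ^ 2 := by
        refine sum_congr rfl fun j _ => ?_
        rw [hcoeff, real_inner_comm (e j) x]
        ring
    _ ≤ ∑ j, sSup (spectrum ℝ A) * inner ℝ x (e j) ^ 2 := by
        gcongr with j; exact hle j
    _ = sSup (spectrum ℝ A) * (v ⬝ᵥ v) := by
        rw [← mul_sum]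
        congr 1
        simp_rw [sq]
        conv_lhs => enter [2, j, 2]; rw [real_inner_comm]
        rw [e.sum_inner_mul_inner]
        rfl

theorem sSup_spectrum_le [DecidableEq n] [Nonempty n] (hA : A.IsHermitian) {c : ℝ}
    (h : ∀ v : n → ℝ, v ⬝ᵥ A *ᵥ v ≤ c * (v ⬝ᵥ v)) : sSup (spectrum ℝ A) ≤ c := by
  rw [hA.spectrum_real_eq_range_eigenvalues]
  refine csSup_le (Set.range_nonempty _) ?_
  rintro _ ⟨j, rfl⟩
  set u : n → ℝ := ⇑(hA.eigenvectorBasis j)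
  have hu : u ⬝ᵥ u = 1 := hA.eigenvectorBasis.inner_eq_one j
  have := h u
  rwa [hA.mulVec_eigenvectorBasis, dotProduct_smul, smul_eq_mul, hu, mul_one, mul_one] at this

theorem two_mul_dotProduct_mulVec_le [DecidableEq n] (hA : A.IsHermitian)
    (hA0 : ∀ i j, 0 ≤ A i j) (x y : n → ℝ) :
    2 * (x ⬝ᵥ A *ᵥ y) ≤ sSup (spectrum ℝ A) * (x ⬝ᵥ x + y ⬝ᵥ y) := by
  set Λ := sSup (spectrum ℝ A)
  -- polarization: `4 ⟪x, A y⟫ = ⟪x + y, A (x + y)⟫ - ⟪x - y, A (x - y)⟫`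
  have hsum := hA.dotProduct_mulVec_self_le (x + y)
  have hdiff : -((x - y) ⬝ᵥ A *ᵥ (x - y)) ≤ Λ * ((x - y) ⬝ᵥ (x - y)) := by
    have habs : |x - y| ⬝ᵥ |x - y| = (x - y) ⬝ᵥ (x - y) :=
      sum_congr rfl fun i _ => abs_mul_abs_self _
    calc -((x - y) ⬝ᵥ A *ᵥ (x - y)) ≤ |x - y| ⬝ᵥ A *ᵥ |x - y| :=
          (neg_le_abs _).trans (abs_dotProduct_mulVec_le hA0 _ _)
      _ ≤ Λ * ((x - y) ⬝ᵥ (x - y)) := habs ▸ hA.dotProduct_mulVec_self_le _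
  have hyx := hA.dotProduct_mulVec_comm y x
  simp only [mulVec_add, mulVec_sub, dotProduct_add, add_dotProduct, dotProduct_sub,
    sub_dotProduct, dotProduct_comm y x] at hsum hdiff
  linarith

end Matrix.IsHermitian

section Graph

variable {V : Type*} (G : SimpleGraph V)

theorem eXY_eq_sum_adjMatrix [DecidableRel G.Adj] (X Y : Finset V) :
    (eXY G X Y : ℝ) = ∑ x ∈ X, ∑ y ∈ Y, G.adjMatrix ℝ x y := by
  classical
  rw [eXY, card_filter, sum_product]
  push_cast
  simp [SimpleGraph.adjMatrix_apply]

theorem adjMatrix_nonneg [DecidableRel G.Adj] (v w : V) : 0 ≤ G.adjMatrix ℝ v w := by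
  rw [SimpleGraph.adjMatrix_apply]; split_ifs <;> norm_num

theorem bddAbove_eXY_div_sqrt [Fintype V] :
    BddAbove {r : ℝ | ∃ X Y : Finset V, X.Nonempty ∧ Y.Nonempty ∧
      r = (eXY G X Y : ℝ) / √((#X : ℝ) * #Y)} := by
  classical
  refine ⟨Fintype.card (V × V), ?_⟩
  rintro r ⟨X, Y, hX, hY, rfl⟩
  have h1 : (1 : ℝ) ≤ √((#X : ℝ) * #Y) := one_le_sqrt.2 (one_le_mul_of_one_le_of_one_le
    (by exact_mod_cast hX.card_pos) (by exact_mod_cast hY.card_pos))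
  refine (div_le_self (Nat.cast_nonneg _) h1).trans ?_
  exact_mod_cast (card_filter_le _ _).trans (card_le_univ _)

theorem eXY_div_sqrt_le_MG [Fintype V] {X Y : Finset V} (hX : X.Nonempty) (hY : Y.Nonempty) :
    (eXY G X Y : ℝ) / √((#X : ℝ) * #Y) ≤ MG G :=
  le_csSup (bddAbove_eXY_div_sqrt G) ⟨X, Y, hX, hY, rfl⟩

theorem eXY_le_MG_mul_sqrt [Fintype V] {X Y : Finset V} (hX : X.Nonempty) (hY : Y.Nonempty) :
    (eXY G X Y : ℝ) ≤ MG G * √((#X : ℝ) * #Y) := by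
  have : (0 : ℝ) < √((#X : ℝ) * #Y) :=
    sqrt_pos.2 (mul_pos (by exact_mod_cast hX.card_pos) (by exact_mod_cast hY.card_pos))
  rw [← div_le_iff₀ this]
  exact eXY_div_sqrt_le_MG G hX hY

theorem MG_nonneg [Fintype V] [Nonempty V] : 0 ≤ MG G :=
  (div_nonneg (Nat.cast_nonneg _) (sqrt_nonneg _)).trans
    (eXY_div_sqrt_le_MG G (univ_nonempty (α := V)) univ_nonempty)

noncomputable def unitIndicator [DecidableEq V] (Z : Finset V) : V → ℝ :=
  fun v => if v ∈ Z then (√(#Z : ℝ))⁻¹ else 0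

theorem unitIndicator_dotProduct_self [Fintype V] [DecidableEq V] {Z : Finset V}
    (hZ : Z.Nonempty) : unitIndicator Z ⬝ᵥ unitIndicator Z = 1 := by
  have : (0 : ℝ) < #Z := by exact_mod_cast hZ.card_pos
  simp only [unitIndicator, dotProduct, mul_ite, ite_mul, mul_zero, zero_mul, sum_ite_mem,
    univ_inter, inter_self, sum_const, nsmul_eq_mul]
  rw [← mul_inv, mul_self_sqrt this.le, mul_inv_cancel₀ this.ne']

theorem unitIndicator_dotProduct_adjMatrix_mulVec [Fintype V] [DecidableEq V]
    [DecidableRel G.Adj] (X Y : Finset V) :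
    unitIndicator X ⬝ᵥ G.adjMatrix ℝ *ᵥ unitIndicator Y = eXY G X Y / √(#X * #Y) := by
  rw [dotProduct_mulVec_eq_sum_sum, eXY_eq_sum_adjMatrix, sqrt_mul (Nat.cast_nonneg _),
    div_eq_mul_inv, mul_inv, sum_mul]
  simp only [unitIndicator, mul_ite, ite_mul, mul_zero, zero_mul, sum_ite_mem, univ_inter,
    sum_ite_irrel, sum_const_zero]
  refine sum_congr rfl fun i _ => ?_
  rw [sum_mul]
  exact sum_congr rfl fun j _ => by ring

theorem MG_le_sSup_spectrum_adjMatrix [Fintype V] [DecidableEq V] [DecidableRel G.Adj]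
    [Nonempty V] : MG G ≤ sSup (spectrum ℝ (G.adjMatrix ℝ)) := by
  refine csSup_le ⟨_, univ, univ, univ_nonempty, univ_nonempty, rfl⟩ ?_
  rintro _ ⟨X, Y, hX, hY, rfl⟩
  have := (G.isHermitian_adjMatrix ℝ).two_mul_dotProduct_mulVec_le (adjMatrix_nonneg G)
    (unitIndicator X) (unitIndicator Y)
  rw [unitIndicator_dotProduct_adjMatrix_mulVec, unitIndicator_dotProduct_self hX,
    unitIndicator_dotProduct_self hY] at this
  linarith

theorem sum_range_sum_range_adjMatrix_le [Fintype V] [DecidableRel G.Adj] {σ τ : ℕ → V}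
    {i j : ℕ} (hσ : Set.InjOn σ (range (i + 1))) (hτ : Set.InjOn τ (range (j + 1))) :
    ∑ k ∈ range (i + 1), ∑ l ∈ range (j + 1), G.adjMatrix ℝ (σ k) (τ l) ≤
      MG G * √((i + 1) * (j + 1)) := by
  classical
  calc ∑ k ∈ range (i + 1), ∑ l ∈ range (j + 1), G.adjMatrix ℝ (σ k) (τ l)
      = eXY G ((range (i + 1)).image σ) ((range (j + 1)).image τ) := by
        rw [eXY_eq_sum_adjMatrix, sum_image hσ]
        exact sum_congr rfl fun k _ => (sum_image hτ).symm
    _ ≤ MG G * √(#((range (i + 1)).image σ) * #((range (j + 1)).image τ)) :=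
        eXY_le_MG_mul_sqrt G (by simp) (by simp)
    _ = MG G * √((i + 1) * (j + 1)) := by
        rw [card_image_of_injOn hσ, card_image_of_injOn hτ, card_range, card_range]
        push_cast
        rfl

theorem sum_sum_mul_adjMatrix_mul_le [Fintype V] [DecidableRel G.Adj] {U W : Finset V}
    (hU : U.Nonempty) (hW : W.Nonempty) {f g : V → ℝ} (hf : ∀ u ∈ U, 0 ≤ f u)
    (hg : ∀ w ∈ W, 0 ≤ g w) :
    ∑ u ∈ U, ∑ w ∈ W, f u * G.adjMatrix ℝ u w * g w ≤
      MG G * (√((1 / 4) * log #U + 1) * √(∑ u ∈ U, f u ^ 2)) *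
        (√((1 / 4) * log #W + 1) * √(∑ w ∈ W, g w ^ 2)) := by
  classical
  have : Nonempty V := ⟨hU.choose⟩
  obtain ⟨σ, a, hσ, hσa, ha, ha0⟩ := U.exists_antitone_rearrangement hU hf
  obtain ⟨τ, b, hτ, hτb, hb, hb0⟩ := W.exists_antitone_rearrangement hW hg
  have sum_σ (F : V → ℝ) : ∑ i ∈ range #U, F (σ i) = ∑ u ∈ U, F u :=
    sum_nbij σ (fun _ hi => hσ.mapsTo hi) hσ.injOn hσ.surjOn fun _ _ => rfl
  have sum_τ (F : V → ℝ) : ∑ j ∈ range #W, F (τ j) = ∑ w ∈ W, F w :=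
    sum_nbij τ (fun _ hj => hτ.mapsTo hj) hτ.injOn hτ.surjOn fun _ _ => rfl
  have hE : ∀ i < #U, ∀ j < #W, ∑ k ∈ range (i + 1), ∑ l ∈ range (j + 1),
      G.adjMatrix ℝ (σ k) (τ l) ≤ MG G * √((i + 1) * (j + 1)) := fun i hi j hj =>
    sum_range_sum_range_adjMatrix_le G (hσ.injOn.mono (by simpa using hi))
      (hτ.injOn.mono (by simpa using hj))
  have hfa : ∑ i ∈ range #U, a i ^ 2 = ∑ u ∈ U, f u ^ 2 := by
    rw [← sum_σ]; exact sum_congr rfl fun i hi => by rw [hσa i hi]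
  have hgb : ∑ j ∈ range #W, b j ^ 2 = ∑ w ∈ W, g w ^ 2 := by
    rw [← sum_τ]; exact sum_congr rfl fun j hj => by rw [hτb j hj]
  calc ∑ u ∈ U, ∑ w ∈ W, f u * G.adjMatrix ℝ u w * g w
      = ∑ i ∈ range #U, ∑ j ∈ range #W, a i * G.adjMatrix ℝ (σ i) (τ j) * b j := by
        rw [← sum_σ]
        refine sum_congr rfl fun i hi => ?_
        rw [← sum_τ]
        exact sum_congr rfl fun j hj => by rw [hσa i hi, hτb j hj]
    _ ≤ _ := sum_range_sum_range_mul_le _ a b (MG_nonneg G) ha ha0 hb hb0 hE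
    _ = _ := by rw [hfa, hgb]

theorem sum_add_sum_eq_sum_of_partition [Fintype V] {U W : Finset V} (hdisj : Disjoint U W)
    (hcover : ∀ v, v ∈ U ∨ v ∈ W) (F : V → ℝ) : ∑ v ∈ U, F v + ∑ v ∈ W, F v = ∑ v, F v := by
  classical
  rw [← sum_union hdisj]
  exact sum_congr (by ext v; simpa using hcover v) fun _ _ => rfl

theorem dotProduct_adjMatrix_mulVec_self_eq [Fintype V] [DecidableRel G.Adj] {U W : Finset V}
    (hdisj : Disjoint U W) (hcover : ∀ v, v ∈ U ∨ v ∈ W)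
    (hbip : ∀ a b, G.Adj a b → (a ∈ U ∧ b ∈ W) ∨ (a ∈ W ∧ b ∈ U)) (x : V → ℝ) :
    x ⬝ᵥ G.adjMatrix ℝ *ᵥ x = 2 * ∑ u ∈ U, ∑ w ∈ W, x u * G.adjMatrix ℝ u w * x w := by
  have hcross {S T : Finset V} (hST : ∀ a ∈ S, ∀ b, G.Adj a b → b ∈ T) (a : V) (ha : a ∈ S) :
      ∑ b, x a * G.adjMatrix ℝ a b * x b = ∑ b ∈ T, x a * G.adjMatrix ℝ a b * x b := by
    refine (sum_subset (subset_univ T) fun b _ hb => ?_).symm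
    rw [SimpleGraph.adjMatrix_apply, if_neg fun hab => hb (hST a ha b hab), mul_zero, zero_mul]
  have hUW : ∀ a ∈ U, ∀ b, G.Adj a b → b ∈ W := fun a ha b hab =>
    (hbip a b hab).elim And.right fun h => absurd ha (disjoint_right.1 hdisj h.1)
  have hWU : ∀ a ∈ W, ∀ b, G.Adj a b → b ∈ U := fun a ha b hab =>
    (hbip a b hab).elim (fun h => absurd h.1 (disjoint_right.1 hdisj ha)) And.right
  rw [dotProduct_mulVec_eq_sum_sum, ← sum_add_sum_eq_sum_of_partition hdisj hcover,
    sum_congr rfl (hcross hUW), sum_congr rfl (hcross hWU), sum_comm (s := W), two_mul]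
  congr 1
  refine sum_congr rfl fun u _ => sum_congr rfl fun w _ => ?_
  simp only [SimpleGraph.adjMatrix_apply, G.adj_comm w u]
  ring

theorem dotProduct_adjMatrix_mulVec_self_le [Fintype V] [DecidableRel G.Adj] {U W : Finset V}
    (hU : U.Nonempty) (hW : W.Nonempty) (hdisj : Disjoint U W) (hcover : ∀ v, v ∈ U ∨ v ∈ W)
    (hbip : ∀ a b, G.Adj a b → (a ∈ U ∧ b ∈ W) ∨ (a ∈ W ∧ b ∈ U)) (x : V → ℝ) :
    x ⬝ᵥ G.adjMatrix ℝ *ᵥ x ≤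
      √(((1 / 4) * log #U + 1) * ((1 / 4) * log #W + 1)) * MG G * (x ⬝ᵥ x) := by
  have : Nonempty V := ⟨hU.choose⟩
  have hCU : 0 ≤ (1 / 4) * log #U + 1 := by
    have := log_nonneg (Nat.one_le_cast.2 hU.card_pos); positivity
  set a := √(∑ u ∈ U, |x| u ^ 2)
  set b := √(∑ w ∈ W, |x| w ^ 2)
  have hab : a ^ 2 + b ^ 2 = x ⬝ᵥ x := by
    rw [sq_sqrt (by positivity), sq_sqrt (by positivity)]
    simp only [Pi.abs_apply, sum_add_sum_eq_sum_of_partition hdisj hcover, dotProduct, sq,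
      abs_mul_abs_self]
  calc x ⬝ᵥ G.adjMatrix ℝ *ᵥ x ≤ |x| ⬝ᵥ G.adjMatrix ℝ *ᵥ |x| :=
        (le_abs_self _).trans (abs_dotProduct_mulVec_le (adjMatrix_nonneg G) x x)
    _ = 2 * ∑ u ∈ U, ∑ w ∈ W, |x| u * G.adjMatrix ℝ u w * |x| w :=
        dotProduct_adjMatrix_mulVec_self_eq G hdisj hcover hbip _
    _ ≤ 2 * (MG G * (√((1 / 4) * log #U + 1) * a) * (√((1 / 4) * log #W + 1) * b)) := by
        gcongr
        exact sum_sum_mul_adjMatrix_mul_le G hU hW (fun _ _ => abs_nonneg _)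
          fun _ _ => abs_nonneg _
    _ = MG G * (√((1 / 4) * log #U + 1) * √((1 / 4) * log #W + 1)) * (2 * a * b) := by ring
    _ ≤ MG G * (√((1 / 4) * log #U + 1) * √((1 / 4) * log #W + 1)) * (a ^ 2 + b ^ 2) :=
        mul_le_mul_of_nonneg_left (two_mul_le_add_sq a b) (by have := MG_nonneg G; positivity)
    _ = _ := by rw [hab, sqrt_mul hCU]; ring

end Graph

/-- Theorem 1′: for a bipartite graph with partite sets `U`, `W`,
`M(G) ≤ λmax(G) ≤ √(((1/4)·log|U| + 1)·((1/4)·log|W| + 1))·M(G)`. -/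
theorem statement8 {V : Type*} [Fintype V] (G : SimpleGraph V)
    (U W : Finset V) (hU : U.Nonempty) (hW : W.Nonempty)
    (hdisj : Disjoint U W) (hcover : ∀ v : V, v ∈ U ∨ v ∈ W)
    (hbip : ∀ a b, G.Adj a b → (a ∈ U ∧ b ∈ W) ∨ (a ∈ W ∧ b ∈ U)) :
    MG G ≤ lamMax G ∧
      lamMax G ≤ Real.sqrt (((1 / 4 : ℝ) * Real.log (U.card : ℝ) + 1) *
        ((1 / 4 : ℝ) * Real.log (W.card : ℝ) + 1)) * MG G := by
  classical
  have : Nonempty V := ⟨hU.choose⟩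
  exact ⟨MG_le_sSup_spectrum_adjMatrix G, (G.isHermitian_adjMatrix ℝ).sSup_spectrum_le
    (dotProduct_adjMatrix_mulVec_self_le G hU hW hdisj hcover hbip)⟩
end
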